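/- arXiv:1710.00430 — 3 statements merged into one kernel-verified Lean document; each statement's English description precedes it below -/
import Mathlib

section
/- Let f(X) be a monic polynomial of degree 3 with coefficients in the polynomial ring F_q[T], let d ∈ F_q[T] be squarefree, and let y₀, y₁ ∈ F_q[T] be coprime polynomials with y₁ ≠ 0. Suppose there exists x ∈ F_q(T) such that d·(y₀/y₁)² = f(x). Then gcd(d, y₁)² divides y₁; in particular deg y₁ ≥ 2·deg gcd(d, y₁²), i.e. |y₁| ≥ |⟨d, y₁²⟩|². -/
open scoped Classical

/-- Let `f(X)` be a monic polynomial of degree 3 with coefficients in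
`F_q[T]`, let `d ∈ F_q[T]` be squarefree, and let `y₀, y₁ ∈ F_q[T]` be coprime with
`y₁ ≠ 0`. If there exists `x ∈ F_q(T)` with `d·(y₀/y₁)² = f(x)`, then `gcd(d, y₁)²`
divides `y₁`; in particular `deg y₁ ≥ 2·deg gcd(d, y₁²)`. -/
theorem stmt_0 {Fq : Type*} [Field Fq] [Fintype Fq]
    (f : Polynomial (Polynomial Fq)) (hmonic : f.Monic) (hdeg : f.natDegree = 3)
    (d y₀ y₁ : Polynomial Fq) (hd : Squarefree d) (hcop : IsCoprime y₀ y₁) (hy₁ : y₁ ≠ 0)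
    (hx : ∃ x : RatFunc Fq,
      algebraMap (Polynomial Fq) (RatFunc Fq) d *
        (algebraMap (Polynomial Fq) (RatFunc Fq) y₀ /
          algebraMap (Polynomial Fq) (RatFunc Fq) y₁) ^ 2 = Polynomial.aeval x f) :
    (EuclideanDomain.gcd d y₁) ^ 2 ∣ y₁ ∧
      2 * (EuclideanDomain.gcd d (y₁ ^ 2)).natDegree ≤ y₁.natDegree := by
  obtain ⟨x, hx⟩ := hx
  set φ := algebraMap (Polynomial Fq) (RatFunc Fq) with hφ
  have hφinj : Function.Injective φ := RatFunc.algebraMap_injective Fq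
  set a : Polynomial Fq := x.num with ha
  set b : Polynomial Fq := x.denom with hbdef
  have hb : b ≠ 0 := x.denom_ne_zero
  have hab : IsCoprime a b := RatFunc.isCoprime_num_denom x
  have hxab : φ a / φ b = x := RatFunc.num_div_denom x
  have hφb : φ b ≠ 0 := RatFunc.algebraMap_ne_zero hb
  have hφy₁ : φ y₁ ≠ 0 := RatFunc.algebraMap_ne_zero hy₁
  set N : Polynomial Fq := ∑ i ∈ Finset.range 4, f.coeff i * a ^ i * b ^ (3 - i) with hN
  -- clearing denominators: φ N = aeval x f * (φ b)^3
  have hNval : φ N = Polynomial.aeval x f * φ b ^ 3 := by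
    rw [Polynomial.aeval_eq_sum_range, hdeg]
    rw [hN, map_sum, Finset.sum_mul]
    refine Finset.sum_congr rfl ?_
    intro i hi
    have hi4 : i < 4 := Finset.mem_range.mp hi
    have hsmul : f.coeff i • x ^ i = φ (f.coeff i) * x ^ i := Algebra.smul_def _ _
    rw [hsmul, map_mul, map_mul, map_pow, map_pow]
    rw [← hxab]
    interval_cases i <;> (field_simp; try ring)
  -- the key polynomial identity
  have key : d * y₀ ^ 2 * b ^ 3 = N * y₁ ^ 2 := by
    apply hφinj
    rw [map_mul, map_mul, map_mul, map_pow, map_pow, map_pow, hNval, ← hx]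
    field_simp
    try ring
  -- coeff 3 = 1
  have hc3 : f.coeff 3 = 1 := by
    have := hmonic.coeff_natDegree
    rwa [hdeg] at this
  -- N = a^3 + b * M
  have hNsplit : N = a ^ 3 + b * (f.coeff 0 * b ^ 2 + f.coeff 1 * a * b + f.coeff 2 * a ^ 2) := by
    rw [hN]
    simp [Finset.sum_range_succ, hc3]
    ring
  have hNb : IsCoprime N b := by
    rw [hNsplit]
    exact (show IsCoprime (a ^ 3) b from hab.pow_left).add_mul_left_left _
  -- gcd setup
  set g : Polynomial Fq := EuclideanDomain.gcd d y₁ with hg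
  have hgd : g ∣ d := EuclideanDomain.gcd_dvd_left d y₁
  have hgy₁ : g ∣ y₁ := EuclideanDomain.gcd_dvd_right d y₁
  have hg0 : g ≠ 0 := by
    intro h
    exact hy₁ (EuclideanDomain.gcd_eq_zero_iff.mp h).2
  have hgsq : Squarefree g := hd.squarefree_of_dvd hgd
  obtain ⟨d', hd'⟩ := hgd
  obtain ⟨y₁', hy₁'⟩ := hgy₁
  -- IsCoprime g d'
  have hgd' : IsCoprime g d' := by
    rw [← EuclideanDomain.gcd_isUnit_iff]
    have h2 : EuclideanDomain.gcd g d' * EuclideanDomain.gcd g d' ∣ d := by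
      rw [hd']
      exact mul_dvd_mul (EuclideanDomain.gcd_dvd_left g d') (EuclideanDomain.gcd_dvd_right g d')
    exact hd _ h2
  -- IsCoprime g y₀
  have hgy₀ : IsCoprime g y₀ := ((hcop.of_isCoprime_of_dvd_right (hy₁' ▸ dvd_mul_right g y₁'))).symm
  -- cancel g in key equation
  have key2 : d' * y₀ ^ 2 * b ^ 3 = N * (g * y₁' ^ 2) := by
    have h := key
    rw [hd', hy₁'] at h
    have : g * (d' * y₀ ^ 2 * b ^ 3) = g * (N * (g * y₁' ^ 2)) := by linear_combination h
    exact mul_left_cancel₀ hg0 this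
  -- g ∣ b^3
  have hgb3 : g ∣ b ^ 3 := by
    have hco : IsCoprime g (d' * y₀ ^ 2) := hgd'.mul_right (hgy₀.pow_right)
    have hdvd : g ∣ d' * y₀ ^ 2 * b ^ 3 := ⟨N * y₁' ^ 2, by rw [key2]; ring⟩
    exact hco.dvd_of_dvd_mul_left hdvd
  have hgb : g ∣ b := hgsq.dvd_pow_iff_dvd (by norm_num) |>.mp hgb3
  obtain ⟨b', hb'⟩ := hgb
  -- cancel another g
  have key3 : d' * y₀ ^ 2 * g ^ 2 * b' ^ 3 = N * y₁' ^ 2 := by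
    have h := key2
    rw [hb'] at h
    have : g * (d' * y₀ ^ 2 * g ^ 2 * b' ^ 3) = g * (N * y₁' ^ 2) := by linear_combination h
    exact mul_left_cancel₀ hg0 this
  -- g^2 ∣ y₁'^2
  have hgN : IsCoprime g N := hNb.symm.of_isCoprime_of_dvd_left ⟨b', hb'⟩
  have hg2 : g ^ 2 ∣ y₁' ^ 2 := by
    have hco : IsCoprime (g ^ 2) N := hgN.pow_left
    have hdvd : g ^ 2 ∣ N * y₁' ^ 2 := ⟨d' * y₀ ^ 2 * b' ^ 3, by rw [← key3]; ring⟩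
    exact hco.dvd_of_dvd_mul_left hdvd
  have hgy₁'' : g ∣ y₁' := (IsIntegrallyClosed.pow_dvd_pow_iff two_ne_zero).mp hg2
  have main : g ^ 2 ∣ y₁ := by
    obtain ⟨c, hc⟩ := hgy₁''
    exact ⟨c, by rw [hy₁', hc]; ring⟩
  refine ⟨main, ?_⟩
  -- second part
  set G : Polynomial Fq := EuclideanDomain.gcd d (y₁ ^ 2) with hG
  have hGd : G ∣ d := EuclideanDomain.gcd_dvd_left _ _
  have hGsq : Squarefree G := hd.squarefree_of_dvd hGd
  have hGy₁ : G ∣ y₁ := hGsq.dvd_pow_iff_dvd (two_ne_zero) |>.mp (EuclideanDomain.gcd_dvd_right _ _)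
  have hGg : G ∣ g := EuclideanDomain.dvd_gcd hGd hGy₁
  have h1 : G.natDegree ≤ g.natDegree := Polynomial.natDegree_le_of_dvd hGg hg0
  have h2 : (g ^ 2).natDegree ≤ y₁.natDegree := Polynomial.natDegree_le_of_dvd main hy₁
  rw [Polynomial.natDegree_pow] at h2
  omega
end

section
/- Let K be a field complete with respect to a nontrivial nonarchimedean absolute value |·|, and let W be a Weierstrass curve y² + a₁xy + a₃y = x³ + a₂x² + a₄x + a₆ over K whose coefficients satisfy |aᵢ| ≤ 1 and whose discriminant Δ satisfies |Δ| = 1 (good reduction). Let P, Q ∈ W(K) be two distinct points, both different from the point at infinity O (so that P − Q ≠ O). Writing x(R) for the x-coordinate of an affine point R, one has max(|x(P − Q)|, 1) ≥ min( max(|x(P)|, 1), max(|x(Q)|, 1) ). Equivalently, for the local height λ(R) = (1/2)·max(log|x(R)|, 0) one has λ(P − Q) ≥ min(λ(P), λ(Q)). -/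
/-!
Only the case `‖x₁‖, ‖x₂‖ > 1` needs an argument. On a Weierstrass curve with integral
coefficients every point has `‖y‖² ≤ max(‖x‖, 1)³`, with equality `‖y‖² = ‖x‖³` once `‖x‖ > 1`.
The points `P`, `-Q` and `-(P - Q)` lie on a line `y = ℓx + m`. If `‖x₃‖` were smaller than both
`‖x₁‖` and `‖x₂‖`, the third point would be negligible next to each of the other two, which forces
`‖x₁‖ = ‖ℓ‖² = ‖x₂‖` and `‖m‖ < ‖ℓ‖³`. But then in Vieta's relation
`x₁x₂ + (x₁ + x₂)x₃ = a₄ - 2ℓm - a₁m - a₃ℓ` the left side has norm `‖ℓ‖⁴` and the right side is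
smaller.
-/

open WeierstrassCurve.Affine IsUltrametricDist

namespace IsUltrametricDist

variable {K : Type*} [NormedField K] [IsUltrametricDist K] {x y : K}

lemma norm_sub_le_max (x y : K) : ‖x - y‖ ≤ max ‖x‖ ‖y‖ := by
  simpa only [sub_eq_add_neg, norm_neg] using norm_add_le_max x (-y)

lemma norm_add_eq_left_of_lt (h : ‖y‖ < ‖x‖) : ‖x + y‖ = ‖x‖ := by
  rw [norm_add_eq_max_of_norm_ne_norm h.ne', max_eq_left h.le]

lemma norm_sub_eq_left_of_lt (h : ‖y‖ < ‖x‖) : ‖x - y‖ = ‖x‖ := by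
  rw [sub_eq_add_neg, norm_add_eq_left_of_lt (by rwa [norm_neg])]

end IsUltrametricDist

lemma norm_mul_pow_le {K : Type*} [NormedField K] {a x : K} (ha : ‖a‖ ≤ 1) {k n : ℕ}
    (hkn : k ≤ n) : ‖a * x ^ k‖ ≤ max ‖x‖ 1 ^ n := by
  rw [norm_mul, norm_pow]
  calc ‖a‖ * ‖x‖ ^ k ≤ 1 * max ‖x‖ 1 ^ k := by gcongr; exact le_max_left _ _
    _ ≤ max ‖x‖ 1 ^ n := by rw [one_mul]; exact pow_le_pow_right₀ (le_max_right _ _) hkn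

namespace WeierstrassCurve

structure IsNormIntegral {K : Type*} [NormedField K] (W : WeierstrassCurve K) : Prop where
  norm_a₁_le : ‖W.a₁‖ ≤ 1
  norm_a₂_le : ‖W.a₂‖ ≤ 1
  norm_a₃_le : ‖W.a₃‖ ≤ 1
  norm_a₄_le : ‖W.a₄‖ ≤ 1
  norm_a₆_le : ‖W.a₆‖ ≤ 1

namespace Affine

lemma Equation.mul_add_eq {R : Type*} [CommRing R] {W : Affine R} {x y : R}
    (h : W.Equation x y) :
    y * (y + (W.a₁ * x + W.a₃)) = x ^ 3 + W.a₂ * x ^ 2 + W.a₄ * x + W.a₆ := by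
  linear_combination (equation_iff x y).mp h

section Field

variable {F : Type*} [Field F] [DecidableEq F] {W : Affine F}

lemma Y_eq_slope_mul_sub_add {x₁ x₂ y₁ y₂ : F} (h₁ : W.Equation x₁ y₁) (h₂ : W.Equation x₂ y₂)
    (hxy : ¬(x₁ = x₂ ∧ y₁ = W.negY x₂ y₂)) :
    y₂ = W.slope x₁ x₂ y₁ y₂ * (x₂ - x₁) + y₁ := by
  by_cases hx : x₁ = x₂
  · obtain rfl := Y_eq_of_Y_ne h₁ h₂ hx fun hy ↦ hxy ⟨hx, hy⟩
    simp [hx]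
  · rw [slope_of_X_ne hx]
    field_simp [sub_ne_zero.mpr hx]
    ring

/-- The third point `(x₃, ℓx₃ + m)` is `-(P₁ + P₂)`; the last conjunct compares the coefficients
of `X` in the cubic that the line cuts out, `∏ (X - xᵢ)`. -/
lemma exists_line_of_add_eq_some {x₁ y₁ x₂ y₂ x₃ y₃ : F} {h₁ : W.Nonsingular x₁ y₁}
    {h₂ : W.Nonsingular x₂ y₂} {h₃ : W.Nonsingular x₃ y₃}
    (hadd : Point.some x₁ y₁ h₁ + Point.some x₂ y₂ h₂ = Point.some x₃ y₃ h₃) :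
    ∃ ℓ m : F, W.Equation x₁ (ℓ * x₁ + m) ∧ W.Equation x₂ (ℓ * x₂ + m) ∧
      W.Equation x₃ (ℓ * x₃ + m) ∧
      x₁ * x₂ + (x₁ + x₂) * x₃ = W.a₄ - 2 * ℓ * m - W.a₁ * m - W.a₃ * ℓ := by
  have hxy : ¬(x₁ = x₂ ∧ y₁ = W.negY x₂ y₂) := fun ⟨hx, hy⟩ ↦
    Point.some_ne_zero h₃ (hadd ▸ Point.add_of_Y_eq hx hy)
  rw [Point.add_some hxy, Point.some.injEq] at hadd
  obtain ⟨rfl, -⟩ := hadd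
  set ℓ := W.slope x₁ x₂ y₁ y₂
  have hvieta := addPolynomial_slope h₁.1 h₂.1 hxy
  rw [addPolynomial_eq, neg_inj, Cubic.prod_X_sub_C_eq, Cubic.toPoly_injective] at hvieta
  refine ⟨ℓ, y₁ - ℓ * x₁, ?_, ?_, ?_, ?_⟩
  · simpa only [add_sub_cancel] using h₁.1
  · convert h₂.1 using 1
    rw [Y_eq_slope_mul_sub_add h₁.1 h₂.1 hxy]
    ring
  · convert equation_negAdd h₁.1 h₂.1 hxy using 1
    rw [negAddY]
    ring
  · linear_combination -(Cubic.ext_iff.mp hvieta).2.2.1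

end Field

section Norm

variable {K : Type*} [NormedField K] [IsUltrametricDist K] {W : Affine K} {x y : K}

lemma norm_a₁_mul_add_a₃_le (hW : IsNormIntegral W) : ‖W.a₁ * x + W.a₃‖ ≤ max ‖x‖ 1 := by
  refine (norm_add_le_max _ _).trans <| max_le ?_ ?_
  · simpa only [pow_one] using norm_mul_pow_le (x := x) hW.norm_a₁_le (le_refl 1)
  · simpa only [pow_zero, pow_one, mul_one] using
      norm_mul_pow_le (x := x) hW.norm_a₃_le (Nat.zero_le 1)

lemma norm_a₂_mul_sq_add_le (hW : IsNormIntegral W) :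
    ‖W.a₂ * x ^ 2 + W.a₄ * x + W.a₆‖ ≤ max ‖x‖ 1 ^ 2 := by
  refine (norm_add_le_max _ _).trans <| max_le ((norm_add_le_max _ _).trans <| max_le
    (norm_mul_pow_le hW.norm_a₂_le le_rfl) ?_) ?_
  · simpa only [pow_one] using norm_mul_pow_le (x := x) hW.norm_a₄_le one_le_two
  · simpa only [pow_zero, mul_one] using norm_mul_pow_le (x := x) hW.norm_a₆_le (Nat.zero_le 2)

lemma norm_cubic_le (hW : IsNormIntegral W) :
    ‖x ^ 3 + W.a₂ * x ^ 2 + W.a₄ * x + W.a₆‖ ≤ max ‖x‖ 1 ^ 3 := by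
  rw [add_assoc, add_assoc, ← add_assoc (W.a₂ * x ^ 2)]
  refine (norm_add_le_max _ _).trans <| max_le ?_ ?_
  · simpa only [one_mul] using norm_mul_pow_le (x := x) (a := 1) norm_one.le le_rfl
  · exact (norm_a₂_mul_sq_add_le hW).trans (pow_le_pow_right₀ (le_max_right _ _) (by norm_num))

lemma norm_cubic_eq (hW : IsNormIntegral W) (hx : 1 < ‖x‖) :
    ‖x ^ 3 + W.a₂ * x ^ 2 + W.a₄ * x + W.a₆‖ = ‖x‖ ^ 3 := by
  have hlow := norm_a₂_mul_sq_add_le hW (x := x)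
  rw [max_eq_left hx.le] at hlow
  have hlt : ‖W.a₂ * x ^ 2 + W.a₄ * x + W.a₆‖ < ‖x ^ 3‖ := by
    rw [norm_pow]
    exact hlow.trans_lt (pow_lt_pow_right₀ hx (by norm_num))
  rw [add_assoc, add_assoc, ← add_assoc (W.a₂ * x ^ 2), norm_add_eq_left_of_lt hlt, norm_pow]

lemma sq_norm_Y_eq_norm_cubic (hW : IsNormIntegral W) (h : W.Equation x y)
    (hy : max ‖x‖ 1 < ‖y‖) : ‖y‖ ^ 2 = ‖x ^ 3 + W.a₂ * x ^ 2 + W.a₄ * x + W.a₆‖ := by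
  rw [← h.mul_add_eq, norm_mul, norm_add_eq_left_of_lt ((norm_a₁_mul_add_a₃_le hW).trans_lt hy),
    sq]

lemma sq_norm_Y_le (hW : IsNormIntegral W) (h : W.Equation x y) :
    ‖y‖ ^ 2 ≤ max ‖x‖ 1 ^ 3 := by
  rcases le_or_gt ‖y‖ (max ‖x‖ 1) with hy | hy
  · calc ‖y‖ ^ 2 ≤ max ‖x‖ 1 ^ 2 := by gcongr
      _ ≤ max ‖x‖ 1 ^ 3 := pow_le_pow_right₀ (le_max_right _ _) (by norm_num)
  · exact (sq_norm_Y_eq_norm_cubic hW h hy).trans_le (norm_cubic_le hW)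

lemma sq_norm_Y_eq (hW : IsNormIntegral W) (h : W.Equation x y) (hx : 1 < ‖x‖) :
    ‖y‖ ^ 2 = ‖x‖ ^ 3 := by
  have hs : max ‖x‖ 1 = ‖x‖ := max_eq_left hx.le
  rcases le_or_gt ‖y‖ ‖x‖ with hy | hy
  · have hxy : ‖y‖ * ‖y + (W.a₁ * x + W.a₃)‖ ≤ ‖x‖ * ‖x‖ := by
      gcongr
      exact (norm_add_le_max _ _).trans (max_le hy (hs ▸ norm_a₁_mul_add_a₃_le hW))
    rw [← norm_mul, h.mul_add_eq, norm_cubic_eq hW hx] at hxy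
    nlinarith [pow_lt_pow_right₀ hx (by norm_num : 2 < 3)]
  · rw [sq_norm_Y_eq_norm_cubic hW h (hs.symm ▸ hy), norm_cubic_eq hW hx]

lemma sq_norm_slope_eq (hW : IsNormIntegral W) {u v ℓ m : K} (hu : W.Equation u (ℓ * u + m))
    (hv : W.Equation v (ℓ * v + m)) (hu₁ : 1 < ‖u‖) (hvu : ‖v‖ < ‖u‖) : ‖ℓ‖ ^ 2 = ‖u‖ := by
  have hyu := sq_norm_Y_eq hW hu hu₁
  have hyv : ‖ℓ * v + m‖ < ‖ℓ * u + m‖ := by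
    refine lt_of_pow_lt_pow_left₀ 2 (norm_nonneg _) ?_
    calc ‖ℓ * v + m‖ ^ 2 ≤ max ‖v‖ 1 ^ 3 := sq_norm_Y_le hW hv
      _ < ‖u‖ ^ 3 := by gcongr; exact max_lt hvu hu₁
      _ = _ := hyu.symm
  have hline : ‖ℓ‖ * ‖u‖ = ‖ℓ * u + m‖ := by
    rw [← norm_sub_eq_left_of_lt hvu, ← norm_mul, ← norm_sub_eq_left_of_lt hyv]
    ring_nf
  have hu₀ : ‖u‖ ^ 2 ≠ 0 := by positivity
  apply mul_right_cancel₀ hu₀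
  rw [← mul_pow, hline, hyu]
  ring

lemma norm_intercept_lt (hW : IsNormIntegral W) {v ℓ m : K} (hv : W.Equation v (ℓ * v + m))
    (hℓ : 1 < ‖ℓ‖) (hvℓ : ‖v‖ < ‖ℓ‖ ^ 2) : ‖m‖ < ‖ℓ‖ ^ 3 := by
  have hy : ‖ℓ * v + m‖ < ‖ℓ‖ ^ 3 := by
    refine lt_of_pow_lt_pow_left₀ 2 (by positivity) ?_
    calc ‖ℓ * v + m‖ ^ 2 ≤ max ‖v‖ 1 ^ 3 := sq_norm_Y_le hW hv
      _ < (‖ℓ‖ ^ 2) ^ 3 := by gcongr; exact max_lt hvℓ (one_lt_pow₀ hℓ two_ne_zero)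
      _ = _ := by ring
  have hℓv : ‖ℓ * v‖ < ‖ℓ‖ ^ 3 := by
    rw [norm_mul, pow_succ']
    gcongr
  calc ‖m‖ = ‖(ℓ * v + m) - ℓ * v‖ := by rw [add_sub_cancel_left]
    _ < ‖ℓ‖ ^ 3 := (norm_sub_le_max _ _).trans_lt (max_lt hy hℓv)

lemma min_norm_le_norm_of_collinear (hW : IsNormIntegral W) {x₁ x₂ x₃ ℓ m : K}
    (h₁ : W.Equation x₁ (ℓ * x₁ + m)) (h₂ : W.Equation x₂ (ℓ * x₂ + m))
    (h₃ : W.Equation x₃ (ℓ * x₃ + m))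
    (hvieta : x₁ * x₂ + (x₁ + x₂) * x₃ = W.a₄ - 2 * ℓ * m - W.a₁ * m - W.a₃ * ℓ)
    (hx₁ : 1 < ‖x₁‖) (hx₂ : 1 < ‖x₂‖) : min ‖x₁‖ ‖x₂‖ ≤ ‖x₃‖ := by
  by_contra! h
  obtain ⟨h₃₁, h₃₂⟩ := lt_min_iff.mp h
  have hℓ₁ := sq_norm_slope_eq hW h₁ h₃ hx₁ h₃₁
  have hℓ₂ := sq_norm_slope_eq hW h₂ h₃ hx₂ h₃₂
  have hℓ : 1 < ‖ℓ‖ := lt_of_pow_lt_pow_left₀ 2 (norm_nonneg _) (by rwa [one_pow, hℓ₁])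
  have hm := norm_intercept_lt hW h₃ hℓ (hℓ₁ ▸ h₃₁)
  have hlhs : ‖x₁ * x₂ + (x₁ + x₂) * x₃‖ = ‖ℓ‖ ^ 4 := by
    have hsum : ‖x₁ + x₂‖ ≤ ‖x₁‖ := (norm_add_le_max _ _).trans (by rw [← hℓ₁, ← hℓ₂, max_self])
    have hlt : ‖(x₁ + x₂) * x₃‖ < ‖x₁ * x₂‖ := by
      rw [norm_mul, norm_mul]
      calc ‖x₁ + x₂‖ * ‖x₃‖ ≤ ‖x₁‖ * ‖x₃‖ := by gcongr
        _ < ‖x₁‖ * ‖x₂‖ := by gcongr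
    rw [norm_add_eq_left_of_lt hlt, norm_mul, ← hℓ₁, ← hℓ₂]
    ring
  have hrhs : ‖W.a₄ - 2 * ℓ * m - W.a₁ * m - W.a₃ * ℓ‖ < ‖ℓ‖ ^ 4 := by
    have h2 : ‖(2 : K)‖ ≤ 1 := by exact_mod_cast norm_natCast_le_one K 2
    refine (norm_sub_le_max _ _).trans_lt <| max_lt ((norm_sub_le_max _ _).trans_lt <|
      max_lt ((norm_sub_le_max _ _).trans_lt <| max_lt ?_ ?_) ?_) ?_
    · exact hW.norm_a₄_le.trans_lt (one_lt_pow₀ hℓ four_ne_zero)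
    · rw [norm_mul, norm_mul]
      calc ‖(2 : K)‖ * ‖ℓ‖ * ‖m‖ ≤ 1 * ‖ℓ‖ * ‖m‖ := by gcongr
        _ < 1 * ‖ℓ‖ * ‖ℓ‖ ^ 3 := by gcongr
        _ = ‖ℓ‖ ^ 4 := by ring
    · rw [norm_mul]
      calc ‖W.a₁‖ * ‖m‖ ≤ 1 * ‖ℓ‖ ^ 3 := by gcongr; exact hW.norm_a₁_le
        _ < ‖ℓ‖ * ‖ℓ‖ ^ 3 := by gcongr
        _ = ‖ℓ‖ ^ 4 := by ring
    · rw [norm_mul]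
      calc ‖W.a₃‖ * ‖ℓ‖ ≤ 1 * ‖ℓ‖ ^ 1 := by rw [pow_one]; gcongr; exact hW.norm_a₃_le
        _ < ‖ℓ‖ ^ 4 := by rw [one_mul]; gcongr; norm_num
  exact (hlhs ▸ hvieta ▸ hrhs).false

lemma min_max_norm_one_le_of_collinear (hW : IsNormIntegral W) {x₁ x₂ x₃ ℓ m : K}
    (h₁ : W.Equation x₁ (ℓ * x₁ + m)) (h₂ : W.Equation x₂ (ℓ * x₂ + m))
    (h₃ : W.Equation x₃ (ℓ * x₃ + m))
    (hvieta : x₁ * x₂ + (x₁ + x₂) * x₃ = W.a₄ - 2 * ℓ * m - W.a₁ * m - W.a₃ * ℓ) :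
    min (max ‖x₁‖ 1) (max ‖x₂‖ 1) ≤ max ‖x₃‖ 1 := by
  rcases le_or_gt ‖x₁‖ 1 with hx₁ | hx₁
  · exact (min_le_left _ _).trans (by rw [max_eq_right hx₁]; exact le_max_right _ _)
  rcases le_or_gt ‖x₂‖ 1 with hx₂ | hx₂
  · exact (min_le_right _ _).trans (by rw [max_eq_right hx₂]; exact le_max_right _ _)
  rw [max_eq_left hx₁.le, max_eq_left hx₂.le]
  exact (min_norm_le_norm_of_collinear hW h₁ h₂ h₃ hvieta hx₁ hx₂).trans (le_max_left _ _)

end Norm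
end Affine
end WeierstrassCurve

lemma max_log_le_of_max_one_le {a b : ℝ} (ha : 0 ≤ a) (hb : 0 ≤ b) (h : max a 1 ≤ max b 1) :
    max (Real.log a) 0 ≤ max (Real.log b) 0 := by
  rw [max_comm a, max_comm b] at h
  rw [max_comm, max_comm (Real.log b), ← Real.posLog_apply, ← Real.posLog_apply,
    Real.posLog_eq_log_max_one ha, Real.posLog_eq_log_max_one hb]
  exact Real.log_le_log (by positivity) h

open Classical in
theorem stmt_4_general {K : Type*} [NontriviallyNormedField K]
    (hna : IsNonarchimedean (norm : K → ℝ))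
    (W : WeierstrassCurve.Affine K)
    (ha₁ : ‖W.a₁‖ ≤ 1) (ha₂ : ‖W.a₂‖ ≤ 1) (ha₃ : ‖W.a₃‖ ≤ 1)
    (ha₄ : ‖W.a₄‖ ≤ 1) (ha₆ : ‖W.a₆‖ ≤ 1)
    (x₁ y₁ x₂ y₂ x₃ y₃ : K)
    (h₁ : W.Nonsingular x₁ y₁) (h₂ : W.Nonsingular x₂ y₂) (h₃ : W.Nonsingular x₃ y₃)
    (hsub : WeierstrassCurve.Affine.Point.some x₁ y₁ h₁ - WeierstrassCurve.Affine.Point.some x₂ y₂ h₂ =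
      WeierstrassCurve.Affine.Point.some x₃ y₃ h₃) :
    min (max ‖x₁‖ 1) (max ‖x₂‖ 1) ≤ max ‖x₃‖ 1 ∧
      min ((1 / 2) * max (Real.log ‖x₁‖) 0) ((1 / 2) * max (Real.log ‖x₂‖) 0) ≤
        (1 / 2) * max (Real.log ‖x₃‖) 0 := by
  have := IsUltrametricDist.isUltrametricDist_of_isNonarchimedean_norm hna
  rw [sub_eq_add_neg, Point.neg_some] at hsub
  obtain ⟨ℓ, m, e₁, e₂, e₃, hvieta⟩ := exists_line_of_add_eq_some hsub
  have hx := min_max_norm_one_le_of_collinear ⟨ha₁, ha₂, ha₃, ha₄, ha₆⟩ e₁ e₂ e₃ hvieta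
  refine ⟨hx, ?_⟩
  have hlog {u v : K} (h : max ‖u‖ 1 ≤ max ‖v‖ 1) :
      1 / 2 * max (Real.log ‖u‖) 0 ≤ 1 / 2 * max (Real.log ‖v‖) 0 :=
    mul_le_mul_of_nonneg_left (max_log_le_of_max_one_le (norm_nonneg _) (norm_nonneg _) h)
      (by norm_num)
  rcases min_le_iff.mp hx with h | h
  · exact min_le_of_left_le (hlog h)
  · exact min_le_of_right_le (hlog h)

open Classical in
/-- Let `K` be a field complete with respect to a nontrivial
nonarchimedean absolute value, and let `W : y² + a₁xy + a₃y = x³ + a₂x² + a₄x + a₆` be a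
Weierstrass curve over `K` with `‖aᵢ‖ ≤ 1` and `‖Δ‖ = 1` (good reduction). For distinct
affine points `P, Q ∈ W(K)` with `P − Q` affine, one has
`max(‖x(P − Q)‖, 1) ≥ min(max(‖x(P)‖, 1), max(‖x(Q)‖, 1))`; equivalently, for the local
height `λ(R) = (1/2)·max(log‖x(R)‖, 0)` one has `λ(P − Q) ≥ min(λ(P), λ(Q))`. -/
theorem stmt_4 {K : Type*} [NontriviallyNormedField K] [CompleteSpace K]
    (hna : IsNonarchimedean (norm : K → ℝ))
    (W : WeierstrassCurve.Affine K)
    (ha₁ : ‖W.a₁‖ ≤ 1) (ha₂ : ‖W.a₂‖ ≤ 1) (ha₃ : ‖W.a₃‖ ≤ 1)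
    (ha₄ : ‖W.a₄‖ ≤ 1) (ha₆ : ‖W.a₆‖ ≤ 1) (hΔ : ‖W.Δ‖ = 1)
    (x₁ y₁ x₂ y₂ x₃ y₃ : K)
    (h₁ : W.Nonsingular x₁ y₁) (h₂ : W.Nonsingular x₂ y₂) (h₃ : W.Nonsingular x₃ y₃)
    (hne : WeierstrassCurve.Affine.Point.some x₁ y₁ h₁ ≠ WeierstrassCurve.Affine.Point.some x₂ y₂ h₂)
    (hsub : WeierstrassCurve.Affine.Point.some x₁ y₁ h₁ - WeierstrassCurve.Affine.Point.some x₂ y₂ h₂ =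
      WeierstrassCurve.Affine.Point.some x₃ y₃ h₃) :
    min (max ‖x₁‖ 1) (max ‖x₂‖ 1) ≤ max ‖x₃‖ 1 ∧
      min ((1 / 2) * max (Real.log ‖x₁‖) 0) ((1 / 2) * max (Real.log ‖x₂‖) 0) ≤
        (1 / 2) * max (Real.log ‖x₃‖) 0 :=
  stmt_4_general hna W ha₁ ha₂ ha₃ ha₄ ha₆ x₁ y₁ x₂ y₂ x₃ y₃ h₁ h₂ h₃ hsub
end

section
/- Let T be a finite index set written as a disjoint union T = T′ ∪ T″, let 0 < ε < 1/2, and for each v ∈ T let d_v ≥ 0, a_v ≥ 0, b_v ≥ 0 and c_v be real numbers such that: c_v ≥ min(a_v, b_v) for all v ∈ T′, and c_v ≥ (1 − ε)·max(a_v, b_v) for all v ∈ T″. Assume moreover that Σ_{v∈T} d_v·|a_v − b_v| ≤ ε · max( Σ_{v∈T} d_v a_v , Σ_{v∈T} d_v b_v ). Then Σ_{v∈T} d_v c_v ≥ (1 − 2ε) · max( Σ_{v∈T} d_v a_v , Σ_{v∈T} d_v b_v ). -/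
private lemma stmt8_aux {ι : Type*} [DecidableEq ι] (T T' T'' : Finset ι)
    (hT : T = T' ∪ T'') (hdisj : Disjoint T' T'')
    (ε : ℝ) (hε₀ : 0 ≤ ε) (hε₁ : ε ≤ 1)
    (d e g c : ι → ℝ)
    (hd : ∀ v ∈ T, 0 ≤ d v) (he : ∀ v ∈ T, 0 ≤ e v) (hg : ∀ v ∈ T, 0 ≤ g v)
    (h1 : ∀ v ∈ T', e v - g v ≤ c v)
    (h2 : ∀ v ∈ T'', (1 - ε) * e v ≤ c v) :
    (∑ v ∈ T, d v * e v) - (∑ v ∈ T, d v * g v) - ε * (∑ v ∈ T, d v * e v)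
      ≤ ∑ v ∈ T, d v * c v := by
  subst hT
  rw [Finset.sum_union hdisj, Finset.sum_union hdisj, Finset.sum_union hdisj]
  have mem' : ∀ v ∈ T', v ∈ T' ∪ T'' := fun v hv => Finset.mem_union_left _ hv
  have mem'' : ∀ v ∈ T'', v ∈ T' ∪ T'' := fun v hv => Finset.mem_union_right _ hv
  have H1 : ∑ v ∈ T', d v * (e v - g v) ≤ ∑ v ∈ T', d v * c v :=
    Finset.sum_le_sum fun v hv =>
      mul_le_mul_of_nonneg_left (h1 v hv) (hd v (mem' v hv))
  have H2 : ∑ v ∈ T'', d v * ((1 - ε) * e v) ≤ ∑ v ∈ T'', d v * c v :=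
    Finset.sum_le_sum fun v hv =>
      mul_le_mul_of_nonneg_left (h2 v hv) (hd v (mem'' v hv))
  have E1 : ∑ v ∈ T', d v * (e v - g v)
      = ∑ v ∈ T', d v * e v - ∑ v ∈ T', d v * g v := by
    rw [← Finset.sum_sub_distrib]; apply Finset.sum_congr rfl; intro v hv; ring
  have E2 : ∑ v ∈ T'', d v * ((1 - ε) * e v)
      = ∑ v ∈ T'', d v * e v - ε * ∑ v ∈ T'', d v * e v := by
    rw [Finset.mul_sum, ← Finset.sum_sub_distrib]
    apply Finset.sum_congr rfl; intro v hv; ring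
  have Hg : 0 ≤ ∑ v ∈ T'', d v * g v :=
    Finset.sum_nonneg fun v hv => mul_nonneg (hd v (mem'' v hv)) (hg v (mem'' v hv))
  have He : 0 ≤ ∑ v ∈ T', d v * e v :=
    Finset.sum_nonneg fun v hv => mul_nonneg (hd v (mem' v hv)) (he v (mem' v hv))
  nlinarith [H1, H2, E1, E2]

/-- Let `T = T′ ∪ T″` be a disjoint union of finite index sets,
`0 < ε < 1/2`, and `d_v, a_v, b_v ≥ 0`, `c_v` real with `c_v ≥ min(a_v, b_v)` on `T′` and
`c_v ≥ (1 − ε)·max(a_v, b_v)` on `T″`. If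
`Σ_{v∈T} d_v·|a_v − b_v| ≤ ε·max(Σ d_v a_v, Σ d_v b_v)`, then
`Σ_{v∈T} d_v c_v ≥ (1 − 2ε)·max(Σ d_v a_v, Σ d_v b_v)`. -/
theorem stmt_8 {ι : Type*} [DecidableEq ι] (T T' T'' : Finset ι) (hT : T = T' ∪ T'')
    (hdisj : Disjoint T' T'')
    (ε : ℝ) (hε₀ : 0 < ε) (hε₁ : ε < 1 / 2)
    (d a b c : ι → ℝ)
    (hd : ∀ v ∈ T, 0 ≤ d v) (ha : ∀ v ∈ T, 0 ≤ a v) (hb : ∀ v ∈ T, 0 ≤ b v)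
    (hc' : ∀ v ∈ T', min (a v) (b v) ≤ c v)
    (hc'' : ∀ v ∈ T'', (1 - ε) * max (a v) (b v) ≤ c v)
    (hsum : ∑ v ∈ T, d v * |a v - b v| ≤
      ε * max (∑ v ∈ T, d v * a v) (∑ v ∈ T, d v * b v)) :
    (1 - 2 * ε) * max (∑ v ∈ T, d v * a v) (∑ v ∈ T, d v * b v) ≤
      ∑ v ∈ T, d v * c v := by
  have hε₀' : (0:ℝ) ≤ ε := le_of_lt hε₀
  have hε₁' : ε ≤ 1 := by linarith
  rcases max_cases (∑ v ∈ T, d v * a v) (∑ v ∈ T, d v * b v) with ⟨hM, _⟩ | ⟨hM, _⟩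
  · have key := stmt8_aux T T' T'' hT hdisj ε hε₀' hε₁' d a (fun v => |a v - b v|) c
      hd ha (fun v _ => abs_nonneg _)
      (fun v hv => by
        have h := hc' v hv
        rcases abs_cases (a v - b v) with ⟨h1, h2⟩ | ⟨h1, h2⟩ <;>
          rcases min_cases (a v) (b v) with ⟨m1, m2⟩ | ⟨m1, m2⟩ <;> linarith)
      (fun v hv => le_trans
        (mul_le_mul_of_nonneg_left (le_max_left _ _) (by linarith)) (hc'' v hv))
    rw [hM] at hsum ⊢
    linarith
  · have key := stmt8_aux T T' T'' hT hdisj ε hε₀' hε₁' d b (fun v => |a v - b v|) c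
      hd hb (fun v _ => abs_nonneg _)
      (fun v hv => by
        have h := hc' v hv
        rcases abs_cases (a v - b v) with ⟨h1, h2⟩ | ⟨h1, h2⟩ <;>
          rcases min_cases (a v) (b v) with ⟨m1, m2⟩ | ⟨m1, m2⟩ <;> linarith)
      (fun v hv => le_trans
        (mul_le_mul_of_nonneg_left (le_max_right _ _) (by linarith)) (hc'' v hv))
    rw [hM] at hsum ⊢
    linarith
end
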